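/- arXiv:1610.06879 — 3 statements merged into one kernel-verified Lean document; each statement's English description precedes it below -/
import Mathlib

section
/- Let R be a ring that is p-torsion free (p a prime), and let R̂ denote the p-adic completion of R. Then the natural map R[1/p]/R → R̂[1/p]/R̂ is a bijection of abelian groups. -/
/-!
Write `R̂` for the `p`-adic completion. As `(p)` is finitely generated, the kernel of the
projection `R̂ → R ⧸ p ^ n R` is exactly `p ^ n R̂`. Hence every element of `R̂` is congruent
modulo `p ^ n R̂` to an element of `R`, and `R → R̂` reflects divisibility by `p ^ n`; moreover `p`
stays a non-zero-divisor on `R̂`, so `R̂ ⊆ R̂[1/p]`. Reflecting divisibility gives injectivity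
(`a / p ^ n` lies in `R̂` only if `p ^ n ∣ a`), and approximation gives surjectivity
(`y / p ^ n ≡ b / p ^ n` modulo `R̂` once `y ≡ b` modulo `p ^ n R̂`).
-/

theorem Submodule.mem_span_singleton_pow_smul_top_iff {R M : Type*} [CommRing R] [AddCommGroup M]
    [Module R M] (q : R) (n : ℕ) (x : M) :
    x ∈ (Ideal.span {q} ^ n • ⊤ : Submodule R M) ↔ ∃ y, q ^ n • y = x := by
  simp [Ideal.span_singleton_pow, Submodule.ideal_span_singleton_smul,
    Submodule.mem_smul_pointwise_iff_exists]

namespace AdicCompletion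

variable {R M : Type*} [CommRing R] [AddCommGroup M] [Module R M] (q : R)

theorem val_eq_zero_iff_exists_pow_smul_eq (n : ℕ) (x : AdicCompletion (Ideal.span {q}) M) :
    x.val n = 0 ↔ ∃ y, q ^ n • y = x := by
  rw [← Submodule.mem_span_singleton_pow_smul_top_iff,
    pow_smul_top_eq_ker_eval (Submodule.fg_span_singleton q)]
  rfl

theorem exists_pow_smul_eq_of_of_eq_pow_smul {n : ℕ} {a : M}
    {y : AdicCompletion (Ideal.span {q}) M} (h : of (Ideal.span {q}) M a = q ^ n • y) :
    ∃ c, q ^ n • c = a := by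
  have hval : (of (Ideal.span {q}) M a).val n = 0 :=
    (val_eq_zero_iff_exists_pow_smul_eq q n _).2 ⟨y, h.symm⟩
  rwa [of_apply, Submodule.mkQ_apply, Submodule.Quotient.mk_eq_zero,
    Submodule.mem_span_singleton_pow_smul_top_iff] at hval

theorem exists_of_sub_eq_pow_smul (n : ℕ) (x : AdicCompletion (Ideal.span {q}) M) :
    ∃ a y, x - of (Ideal.span {q}) M a = q ^ n • y := by
  obtain ⟨a, ha⟩ := Submodule.Quotient.mk_surjective _ (x.val n)
  obtain ⟨y, hy⟩ := (val_eq_zero_iff_exists_pow_smul_eq q n (x - of _ M a)).1 (by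
    rw [val_sub_apply, of_apply, Submodule.mkQ_apply, ha, sub_self])
  exact ⟨a, y, hy.symm⟩

theorem isSMulRegular (hq : IsSMulRegular M q) :
    IsSMulRegular (AdicCompletion (Ideal.span {q}) M) q := by
  refine IsSMulRegular.of_right_eq_zero_of_smul fun x hx => ext fun n => ?_
  -- `q • x = 0` at level `n + 1` forces a lift of `x.val (n + 1)` into `q ^ n M`, so `x.val n = 0`.
  obtain ⟨a, ha⟩ := Submodule.Quotient.mk_surjective _ (x.val (n + 1))
  have hqa : q • a ∈ (Ideal.span {q} ^ (n + 1) • ⊤ : Submodule R M) := by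
    rw [← Submodule.Quotient.mk_eq_zero, Submodule.Quotient.mk_smul, ha, ← val_smul_apply, hx]
    rfl
  obtain ⟨c, hc⟩ := (Submodule.mem_span_singleton_pow_smul_top_iff q _ _).1 hqa
  have hac : q ^ n • c = a :=
    hq (show q • q ^ n • c = q • a by rw [← hc, pow_succ', mul_smul])
  rw [← x.prop (Nat.le_succ n), ← ha, ← hac]
  exact (Submodule.Quotient.mk_eq_zero _).2
    ((Submodule.mem_span_singleton_pow_smul_top_iff q n _).2 ⟨c, rfl⟩)

end AdicCompletion

namespace Localization

variable {R S : Type*} [CommRing R] [CommRing S] (f : R →+* S) (q : R)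

theorem exists_algebraMap_eq_of_awayMap_eq_algebraMap (hq : f q ∈ nonZeroDivisors S)
    (hdvd : ∀ (n : ℕ) (a : R), f q ^ n ∣ f a → q ^ n ∣ a)
    {x : Away q} {y : S} (hxy : algebraMap S (Away (f q)) y = awayMap f q x) :
    ∃ r : R, algebraMap R (Away q) r = x := by
  obtain ⟨⟨a, _, n, rfl⟩, rfl⟩ := IsLocalization.mk'_surjective (Submonoid.powers q) x
  dsimp only at hxy ⊢
  have hinj : Function.Injective (algebraMap S (Away (f q))) :=
    IsLocalization.injective _ (Submonoid.powers_le.2 hq)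
  have hya : y * f q ^ n = f a := by
    apply hinj
    rw [awayMap, IsLocalization.Away.map, IsLocalization.map_mk',
      IsLocalization.eq_mk'_iff_mul_eq] at hxy
    simpa using hxy
  obtain ⟨c, rfl⟩ := hdvd n a ⟨y, by rw [← hya, mul_comm]⟩
  exact ⟨c, (IsLocalization.mk'_mul_cancel_left _ _).symm⟩

theorem exists_sub_awayMap_eq_algebraMap
    (hdense : ∀ (n : ℕ) (y : S), ∃ b : R, f q ^ n ∣ y - f b) (z : Away (f q)) :
    ∃ (x : Away q) (y : S), z - awayMap f q x = algebraMap S (Away (f q)) y := by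
  obtain ⟨⟨Y, _, n, rfl⟩, rfl⟩ := IsLocalization.mk'_surjective (Submonoid.powers (f q)) z
  dsimp only
  obtain ⟨b, w, hw⟩ := hdense n Y
  refine ⟨IsLocalization.mk' _ b (⟨q ^ n, n, rfl⟩ : Submonoid.powers q), w, ?_⟩
  rw [awayMap, IsLocalization.Away.map, IsLocalization.map_mk', ← IsLocalization.mk'_sub,
    IsLocalization.mk'_eq_iff_eq_mul, ← map_mul]
  congr 1
  simp only [Submonoid.coe_mul, map_pow]
  linear_combination f q ^ n * hw

end Localization

theorem localization_quotient_completion_bijective_general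
    (p : ℕ) (R : Type*) [CommRing R]
    (htf : ∀ x : R, (p : R) * x = 0 → x = 0) :
    (∀ x : Localization.Away (p : R),
      (∃ y : AdicCompletion (Ideal.span {(p : R)}) R,
        algebraMap (AdicCompletion (Ideal.span {(p : R)}) R)
          (Localization.Away
            (algebraMap R (AdicCompletion (Ideal.span {(p : R)}) R) (p : R))) y
          = Localization.awayMap
              (algebraMap R (AdicCompletion (Ideal.span {(p : R)}) R)) (p : R) x) →
      ∃ r : R, algebraMap R (Localization.Away (p : R)) r = x) ∧
    (∀ z : Localization.Away
        (algebraMap R (AdicCompletion (Ideal.span {(p : R)}) R) (p : R)),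
      ∃ (x : Localization.Away (p : R))
        (y : AdicCompletion (Ideal.span {(p : R)}) R),
        z - Localization.awayMap
              (algebraMap R (AdicCompletion (Ideal.span {(p : R)}) R)) (p : R) x
          = algebraMap (AdicCompletion (Ideal.span {(p : R)}) R)
              (Localization.Away
                (algebraMap R (AdicCompletion (Ideal.span {(p : R)}) R) (p : R))) y) := by
  have hsmul (n : ℕ) (y : AdicCompletion (Ideal.span {(p : R)}) R) :
      (p : R) ^ n • y = algebraMap R _ (p : R) ^ n * y := by
    rw [Algebra.smul_def, map_pow]
  have hreg := AdicCompletion.isSMulRegular (p : R) (IsSMulRegular.of_right_eq_zero_of_smul htf)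
  refine ⟨fun x ⟨y, hy⟩ => ?_,
    Localization.exists_sub_awayMap_eq_algebraMap _ _ fun n y => ?_⟩
  · refine Localization.exists_algebraMap_eq_of_awayMap_eq_algebraMap _ _ ?_
      (fun n a ⟨w, hw⟩ => ?_) hy
    · refine mem_nonZeroDivisors_iff_right.2 fun z hz => hreg.right_eq_zero_of_smul ?_
      rw [Algebra.smul_def, mul_comm, hz]
    · obtain ⟨c, hc⟩ :=
        AdicCompletion.exists_pow_smul_eq_of_of_eq_pow_smul (p : R) (by rw [hsmul]; exact hw)
      exact ⟨c, hc.symm⟩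
  · obtain ⟨b, w, hw⟩ := AdicCompletion.exists_of_sub_eq_pow_smul (p : R) n y
    exact ⟨b, w, by rw [← hsmul]; exact hw⟩

/-- **Bhatt–Lütke: `R[1/p]/R ≃ R̂[1/p]/R̂` for `p`-torsion-free `R`.**
Let `R` be a commutative ring in which `p` is a non-zero-divisor and let
`R̂ = AdicCompletion (span {p}) R` be its `p`-adic completion.  Then the natural map
`R[1/p]/R → R̂[1/p]/R̂` is a bijection of abelian groups.  We express bijectivity of the
induced map on quotients directly: (injectivity) any element of `R[1/p]` landing in `R̂`
already lies in `R`; (surjectivity) every element of `R̂[1/p]` is congruent modulo `R̂`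
to an element coming from `R[1/p]`. -/
theorem localization_quotient_completion_bijective
    (p : ℕ) (hp : p.Prime) (R : Type*) [CommRing R]
    (htf : ∀ x : R, (p : R) * x = 0 → x = 0) :
    (∀ x : Localization.Away (p : R),
      (∃ y : AdicCompletion (Ideal.span {(p : R)}) R,
        algebraMap (AdicCompletion (Ideal.span {(p : R)}) R)
          (Localization.Away
            (algebraMap R (AdicCompletion (Ideal.span {(p : R)}) R) (p : R))) y
          = Localization.awayMap
              (algebraMap R (AdicCompletion (Ideal.span {(p : R)}) R)) (p : R) x) →
      ∃ r : R, algebraMap R (Localization.Away (p : R)) r = x) ∧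
    (∀ z : Localization.Away
        (algebraMap R (AdicCompletion (Ideal.span {(p : R)}) R) (p : R)),
      ∃ (x : Localization.Away (p : R))
        (y : AdicCompletion (Ideal.span {(p : R)}) R),
        z - Localization.awayMap
              (algebraMap R (AdicCompletion (Ideal.span {(p : R)}) R)) (p : R) x
          = algebraMap (AdicCompletion (Ideal.span {(p : R)}) R)
              (Localization.Away
                (algebraMap R (AdicCompletion (Ideal.span {(p : R)}) R) (p : R))) y) :=
  localization_quotient_completion_bijective_general p R htf
end

section
/- Let R be a p-torsion-free commutative ring with p-adic completion R̂, and assume every element of R whose reduction mod p is a unit is itself a unit in R. Then the natural map GL_n(R[1/p])/GL_n(R) → GL_n(R̂[1/p])/GL_n(R̂) of left coset spaces is injective. -/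
/-!
Put `R̂ = AdicCompletion (span {p}) R` and `k = g'⁻¹ g`. The hypothesis says that the image of `k`
in `GLₙ(R̂[1/p])` comes from `GLₙ(R̂)`, so it suffices that `R[1/p] ∩ R̂ = R` inside `R̂[1/p]`:
then the entries of `k` and `k⁻¹` lie in `R`, i.e. `k ∈ GLₙ(R)`. For `x = r / pᵐ` with image
`y ∈ R̂` we get `r = pᵐ y` in `R̂` (as `p` stays a non-zero-divisor in `R̂`), and reducing
modulo `pᵐ`, where `R̂ / pᵐ = R / pᵐ`, shows `pᵐ ∣ r` in `R`.
-/

open nonZeroDivisors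

theorem Units.mem_range_map_of_val_mem_range {M N : Type*} [Monoid M] [Monoid N] {φ : M →* N}
    (hφ : Function.Injective φ) {u : Nˣ} (hu : (u : N) ∈ Set.range φ)
    (hu_inv : ((u⁻¹ : Nˣ) : N) ∈ Set.range φ) :
    u ∈ (Units.map φ).range := by
  obtain ⟨m, hm⟩ := hu
  obtain ⟨m', hm'⟩ := hu_inv
  refine ⟨⟨m, m', hφ ?_, hφ ?_⟩, Units.ext hm⟩
  · rw [map_mul, hm, hm', u.mul_inv, map_one]
  · rw [map_mul, hm, hm', u.inv_mul, map_one]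

theorem Matrix.exists_map_eq_of_forall_mem_range {m n α β : Type*} {f : α → β}
    {A : Matrix m n β} (hA : ∀ i j, A i j ∈ Set.range f) :
    ∃ B : Matrix m n α, B.map f = A := by
  choose B hB using hA
  exact ⟨Matrix.of B, Matrix.ext hB⟩

theorem Matrix.GeneralLinearGroup.mem_range_map_of_forall_mem_range {n R S : Type*}
    [Fintype n] [DecidableEq n] [CommRing R] [CommRing S] {f : R →+* S}
    (hf : Function.Injective f) {g : GL n S} (hg : ∀ i j, g i j ∈ Set.range f)
    (hg_inv : ∀ i j, g⁻¹ i j ∈ Set.range f) :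
    g ∈ (map f).range :=
  Units.mem_range_map_of_val_mem_range (Matrix.map_injective hf)
    (Matrix.exists_map_eq_of_forall_mem_range hg)
    (Matrix.exists_map_eq_of_forall_mem_range hg_inv)

section

variable {R : Type*} [CommRing R] (a : R)

theorem Localization.mem_range_algebraMap_of_awayMap_mem_range {S : Type*} [CommRing S]
    (f : R →+* S) (hreg : f a ∈ S⁰) (hdvd : ∀ (k : ℕ) (r : R), f a ^ k ∣ f r → a ^ k ∣ r)
    {x : Localization.Away a}
    (hx : Localization.awayMap f a x ∈ Set.range (algebraMap S (Localization.Away (f a)))) :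
    x ∈ Set.range (algebraMap R (Localization.Away a)) := by
  obtain ⟨y, hy⟩ := hx
  obtain ⟨k, r, hr⟩ := IsLocalization.Away.surj a x
  have hinj : Function.Injective (algebraMap S (Localization.Away (f a))) :=
    IsLocalization.injective _ (Submonoid.powers_le.mpr hreg)
  have hmap (t : R) : Localization.awayMap f a (algebraMap R _ t) = algebraMap S _ (f t) :=
    IsLocalization.map_eq _ t
  have hfr : f a ^ k * y = f r := hinj <| by
    rw [map_mul, hy, ← map_pow, ← hmap, ← hmap, ← map_mul, mul_comm, map_pow, hr]
  obtain ⟨s, rfl⟩ := hdvd k r ⟨y, hfr.symm⟩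
  refine ⟨s, ((IsLocalization.Away.algebraMap_isUnit a).pow k).mul_right_cancel ?_⟩
  rw [hr, map_mul, map_pow, mul_comm]

namespace AdicCompletion

theorem pow_dvd_of_algebraMap_pow_dvd {k : ℕ} {r : R}
    (h : algebraMap R (AdicCompletion (Ideal.span {a}) R) a ^ k ∣
      algebraMap R (AdicCompletion (Ideal.span {a}) R) r) :
    a ^ k ∣ r := by
  obtain ⟨y, hy⟩ := h
  have hmk := congrArg (evalₐ (Ideal.span {a}) k) hy
  rw [AlgHom.commutes, map_mul, map_pow, AlgHom.commutes, Ideal.Quotient.algebraMap_eq, ← map_pow,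
    Ideal.Quotient.eq_zero_iff_mem.mpr (Ideal.pow_mem_pow (Ideal.mem_span_singleton_self a) k),
    zero_mul, Ideal.Quotient.eq_zero_iff_mem, Ideal.span_singleton_pow,
    Ideal.mem_span_singleton] at hmk
  exact hmk

theorem algebraMap_mem_nonZeroDivisors (ha : a ∈ R⁰) :
    algebraMap R (AdicCompletion (Ideal.span {a}) R) a ∈ (AdicCompletion (Ideal.span {a}) R)⁰ := by
  refine mem_nonZeroDivisors_iff_left.mpr fun y hy => ext_evalₐ fun n => ?_
  obtain ⟨f, rfl⟩ := mk_surjective _ _ y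
  have hdvd := congrArg (evalₐ (Ideal.span {a}) (n + 1)) hy
  rw [map_mul, AlgHom.commutes, Ideal.Quotient.algebraMap_eq, evalₐ_mk, _root_.map_zero,
    ← map_mul, Ideal.Quotient.eq_zero_iff_mem, Ideal.span_singleton_pow, Ideal.mem_span_singleton,
    pow_succ', dvd_cancel_left_mem_nonZeroDivisors ha] at hdvd
  rw [evalₐ_mk, _root_.map_zero, ← Ideal.mk_eq_mk (Ideal.span {a}) n.le_succ f,
    Ideal.Quotient.eq_zero_iff_mem, Ideal.span_singleton_pow, Ideal.mem_span_singleton]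
  exact hdvd

theorem mem_range_algebraMap_of_awayMap_mem_range (ha : a ∈ R⁰) {x : Localization.Away a}
    (hx : Localization.awayMap (algebraMap R (AdicCompletion (Ideal.span {a}) R)) a x ∈
      Set.range (algebraMap (AdicCompletion (Ideal.span {a}) R)
        (Localization.Away (algebraMap R (AdicCompletion (Ideal.span {a}) R) a)))) :
    x ∈ Set.range (algebraMap R (Localization.Away a)) :=
  Localization.mem_range_algebraMap_of_awayMap_mem_range a _
    (algebraMap_mem_nonZeroDivisors a ha) (fun _ _ => pow_dvd_of_algebraMap_pow_dvd a) hx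

end AdicCompletion

end

theorem gln_coset_map_injective_general
    (p : ℕ) (n : ℕ) (R : Type*) [CommRing R]
    (htf : ∀ x : R, (p : R) * x = 0 → x = 0)
    (g g' : Matrix.GeneralLinearGroup (Fin n) (Localization.Away (p : R)))
    (h : ∃ u : Matrix.GeneralLinearGroup (Fin n) (AdicCompletion (Ideal.span {(p : R)}) R),
      Matrix.GeneralLinearGroup.map
          (Localization.awayMap
            (algebraMap R (AdicCompletion (Ideal.span {(p : R)}) R)) (p : R)) g
        = Matrix.GeneralLinearGroup.map
            (Localization.awayMap
              (algebraMap R (AdicCompletion (Ideal.span {(p : R)}) R)) (p : R)) g'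
          * Matrix.GeneralLinearGroup.map
              (algebraMap (AdicCompletion (Ideal.span {(p : R)}) R)
                (Localization.Away
                  (algebraMap R (AdicCompletion (Ideal.span {(p : R)}) R) (p : R)))) u) :
    ∃ v : Matrix.GeneralLinearGroup (Fin n) R,
      g = g' * Matrix.GeneralLinearGroup.map
        (algebraMap R (Localization.Away (p : R))) v := by
  obtain ⟨u, hu⟩ := h
  set F := Localization.awayMap (algebraMap R (AdicCompletion (Ideal.span {(p : R)}) R)) (p : R)
  set G := algebraMap (AdicCompletion (Ideal.span {(p : R)}) R)
    (Localization.Away (algebraMap R (AdicCompletion (Ideal.span {(p : R)}) R) (p : R)))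
  have hp : (p : R) ∈ R⁰ := mem_nonZeroDivisors_iff_left.mpr htf
  have entry_mem {w : Matrix.GeneralLinearGroup (Fin n) (Localization.Away (p : R))}
      {z : Matrix.GeneralLinearGroup (Fin n) (AdicCompletion (Ideal.span {(p : R)}) R)}
      (hwz : Matrix.GeneralLinearGroup.map F w = Matrix.GeneralLinearGroup.map G z) (i j : Fin n) :
      w i j ∈ Set.range (algebraMap R (Localization.Away (p : R))) :=
    AdicCompletion.mem_range_algebraMap_of_awayMap_mem_range _ hp
      ⟨z i j, by rw [← Matrix.GeneralLinearGroup.map_apply, ← hwz,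
        Matrix.GeneralLinearGroup.map_apply]⟩
  have hk : Matrix.GeneralLinearGroup.map F (g'⁻¹ * g) = Matrix.GeneralLinearGroup.map G u := by
    rw [map_mul, map_inv, hu, inv_mul_cancel_left]
  have hk_inv : Matrix.GeneralLinearGroup.map F (g'⁻¹ * g)⁻¹ =
      Matrix.GeneralLinearGroup.map G u⁻¹ := by
    rw [map_inv, map_inv, hk]
  obtain ⟨v, hv⟩ := Matrix.GeneralLinearGroup.mem_range_map_of_forall_mem_range
    (IsLocalization.injective _ (Submonoid.powers_le.mpr hp)) (entry_mem hk) (entry_mem hk_inv)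
  exact ⟨v, by rw [hv, mul_inv_cancel_left]⟩

/-- **Injectivity of `GLₙ(R[1/p])/GLₙ(R) → GLₙ(R̂[1/p])/GLₙ(R̂)`.**
Let `p` be prime, `R` a commutative ring in which `p` is a non-zero-divisor, with
`p`-adic completion `R̂`, and assume every element of `R` whose reduction mod `p` is a
unit is a unit in `R`.  The natural map of left coset spaces
`GLₙ(R[1/p])/GLₙ(R) → GLₙ(R̂[1/p])/GLₙ(R̂)` is injective: if `g, g'` in `GLₙ(R[1/p])`
become equal modulo `GLₙ(R̂)` after mapping to `GLₙ(R̂[1/p])`, then they are already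
equal modulo `GLₙ(R)`. -/
theorem gln_coset_map_injective
    (p : ℕ) (hp : p.Prime) (n : ℕ) (R : Type*) [CommRing R]
    (htf : ∀ x : R, (p : R) * x = 0 → x = 0)
    (hunit : ∀ x : R, IsUnit (Ideal.Quotient.mk (Ideal.span {(p : R)}) x) → IsUnit x)
    (g g' : Matrix.GeneralLinearGroup (Fin n) (Localization.Away (p : R)))
    (h : ∃ u : Matrix.GeneralLinearGroup (Fin n) (AdicCompletion (Ideal.span {(p : R)}) R),
      Matrix.GeneralLinearGroup.map
          (Localization.awayMap
            (algebraMap R (AdicCompletion (Ideal.span {(p : R)}) R)) (p : R)) g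
        = Matrix.GeneralLinearGroup.map
            (Localization.awayMap
              (algebraMap R (AdicCompletion (Ideal.span {(p : R)}) R)) (p : R)) g'
          * Matrix.GeneralLinearGroup.map
              (algebraMap (AdicCompletion (Ideal.span {(p : R)}) R)
                (Localization.Away
                  (algebraMap R (AdicCompletion (Ideal.span {(p : R)}) R) (p : R)))) u) :
    ∃ v : Matrix.GeneralLinearGroup (Fin n) R,
      g = g' * Matrix.GeneralLinearGroup.map
        (algebraMap R (Localization.Away (p : R))) v :=
  gln_coset_map_injective_general p n R htf g g' h
end

section
/- Let σ be an automorphism of a Coxeter-like group W with length function ℓ satisfying ℓ(σ(w)) = ℓ(w). An element w ∈ W is called σ-straight if ℓ(w σ(w) σ²(w) ⋯ σ^{n-1}(w)) = n·ℓ(w) for all n ∈ ℕ. Then: if w is σ-straight and w' is obtained from w by a sequence of length-preserving elementary σ-conjugations w ↦ s w σ(s) with ℓ(swσ(s)) = ℓ(w) (s a simple reflection), then w' is also σ-straight. -/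
/-- The `σ`-twisted product `w · σ(w) · σ²(w) ⋯ σⁿ⁻¹(w)`. -/
def twistedPow {W : Type*} [Group W] (σ : MulAut W) (w : W) (n : ℕ) : W :=
  ((List.range n).map fun i => (σ ^ i) w).prod

/-- `w` is `σ`-straight: `ℓ(w σ(w) ⋯ σⁿ⁻¹(w)) = n·ℓ(w)` for all `n`. -/
def IsSigmaStraight {W : Type*} [Group W] (ℓ : W → ℕ) (σ : MulAut W) (w : W) : Prop :=
  ∀ n : ℕ, ℓ (twistedPow σ w n) = n * ℓ w

lemma twistedPow_succ {W : Type*} [Group W] (σ : MulAut W) (w : W) (n : ℕ) :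
    twistedPow σ w (n + 1) = twistedPow σ w n * (σ ^ n) w := by
  simp [twistedPow, List.range_succ]

lemma pow_apply_len {W : Type*} [Group W] (ℓ : W → ℕ) (σ : MulAut W)
    (hσ : ∀ x : W, ℓ (σ x) = ℓ x) (n : ℕ) (x : W) : ℓ ((σ ^ n) x) = ℓ x := by
  induction n with
  | zero => simp
  | succ n ih => rw [pow_succ', MulAut.mul_apply, hσ, ih]

lemma twistedPow_conj {W : Type*} [Group W] (σ : MulAut W) (u s : W)
    (hs : s⁻¹ = s) (n : ℕ) :
    twistedPow σ (s * u * σ s) n = s * twistedPow σ u n * (σ ^ n) s := by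
  have hss : s * s = 1 := by nth_rewrite 1 [← hs]; exact inv_mul_cancel s
  induction n with
  | zero => simp [twistedPow, hss]
  | succ n ih =>
      rw [twistedPow_succ, twistedPow_succ, ih]
      have h1 : (σ ^ n) (s * u * σ s) = (σ ^ n) s * (σ ^ n) u * (σ ^ (n + 1)) s := by
        rw [map_mul, map_mul, pow_succ, MulAut.mul_apply]
      have h2 : (σ ^ n) s * (σ ^ n) s = 1 := by rw [← map_mul, hss, map_one]
      rw [h1]
      calc s * twistedPow σ u n * (σ ^ n) s * ((σ ^ n) s * (σ ^ n) u * (σ ^ (n + 1)) s)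
          = s * twistedPow σ u n * ((σ ^ n) s * (σ ^ n) s) * (σ ^ n) u * (σ ^ (n + 1)) s := by
            group
        _ = s * (twistedPow σ u n * (σ ^ n) u) * (σ ^ (n + 1)) s := by rw [h2]; group

lemma twistedPow_add {W : Type*} [Group W] (σ : MulAut W) (w : W) (a b : ℕ) :
    twistedPow σ w (a + b) = twistedPow σ w a * (σ ^ a) (twistedPow σ w b) := by
  induction b with
  | zero => simp [twistedPow]
  | succ b ih =>
      rw [← add_assoc, twistedPow_succ, twistedPow_succ, ih, map_mul, ← mul_assoc,
        ← MulAut.mul_apply, ← pow_add]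

/-- **`σ`-straightness is preserved by length-preserving elementary `σ`-conjugations.**
Let `W` be a Coxeter-like group with length function `ℓ` (subadditive, with a
`σ`-stable set `S` of simple reflections of length 1, each an involution, and with
`ℓ` invariant under inverses and under the length-preserving automorphism `σ`).
If `w` is `σ`-straight and `w'` is obtained from `w` by a chain of elementary
`σ`-conjugations `u ↦ s·u·σ(s)` with `s ∈ S` which preserve the length, then `w'`
is `σ`-straight. -/
theorem sigmaStraight_of_chain
    {W : Type*} [Group W] (ℓ : W → ℕ) (σ : MulAut W) (S : Set W)
    (hsub : ∀ x y : W, ℓ (x * y) ≤ ℓ x + ℓ y)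
    (hS1 : ∀ s ∈ S, ℓ s = 1)
    (hSinv : ∀ s ∈ S, s⁻¹ = s)
    (hSσ : ∀ s ∈ S, σ s ∈ S)
    (hinv : ∀ x : W, ℓ x⁻¹ = ℓ x)
    (hσ : ∀ x : W, ℓ (σ x) = ℓ x)
    (w w' : W)
    (hchain : Relation.ReflTransGen
      (fun u v => ∃ s ∈ S, v = s * u * σ s ∧ ℓ v = ℓ u) w w')
    (hw : IsSigmaStraight ℓ σ w) :
    IsSigmaStraight ℓ σ w' := by
  have hσn := pow_apply_len ℓ σ hσ
  -- single step
  have step : ∀ u v : W, (∃ s ∈ S, v = s * u * σ s ∧ ℓ v = ℓ u) →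
      IsSigmaStraight ℓ σ u → IsSigmaStraight ℓ σ v := by
    rintro u v ⟨s, hsS, rfl, hlen⟩ hu
    set v := s * u * σ s with hv
    have hone : ℓ (1 : W) = 0 := by simpa [twistedPow] using hu 0
    -- upper bound
    have upper : ∀ n, ℓ (twistedPow σ v n) ≤ n * ℓ v := by
      intro n
      induction n with
      | zero => simpa [twistedPow] using hone.le
      | succ n ih =>
          rw [twistedPow_succ]
          calc ℓ (twistedPow σ v n * (σ ^ n) v) ≤ ℓ (twistedPow σ v n) + ℓ ((σ ^ n) v) :=
                hsub _ _
            _ ≤ n * ℓ v + ℓ v := by rw [hσn]; omega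
            _ = (n + 1) * ℓ v := by ring
    -- lower bound: n * ℓ v ≤ ℓ (twistedPow σ v n) + 2
    have lower : ∀ n, n * ℓ v ≤ ℓ (twistedPow σ v n) + 2 := by
      intro n
      have hconj := twistedPow_conj σ u s (hSinv s hsS) n
      have hu' : twistedPow σ u n = s⁻¹ * twistedPow σ v n * ((σ ^ n) s)⁻¹ := by
        rw [hconj]; group
      have h1 : ℓ (twistedPow σ u n) ≤ 1 + ℓ (twistedPow σ v n) + 1 := by
        rw [hu']
        calc ℓ (s⁻¹ * twistedPow σ v n * ((σ ^ n) s)⁻¹)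
            ≤ ℓ (s⁻¹ * twistedPow σ v n) + ℓ (((σ ^ n) s)⁻¹) := hsub _ _
          _ ≤ ℓ s⁻¹ + ℓ (twistedPow σ v n) + ℓ (((σ ^ n) s)⁻¹) := by
              have := hsub s⁻¹ (twistedPow σ v n); omega
          _ = 1 + ℓ (twistedPow σ v n) + 1 := by
              rw [hinv, hinv, hσn, hS1 s hsS]
      rw [hlen] at *
      have := hu n
      omega
    -- subadditivity of f
    have fsub : ∀ a b, ℓ (twistedPow σ v (a + b)) ≤
        ℓ (twistedPow σ v a) + ℓ (twistedPow σ v b) := by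
      intro a b
      rw [twistedPow_add]
      calc ℓ (twistedPow σ v a * (σ ^ a) (twistedPow σ v b))
          ≤ ℓ (twistedPow σ v a) + ℓ ((σ ^ a) (twistedPow σ v b)) := hsub _ _
        _ = _ := by rw [hσn]
    intro n
    by_contra hne
    have hlt : ℓ (twistedPow σ v n) < n * ℓ v := lt_of_le_of_ne (upper n) hne
    have h3 : ℓ (twistedPow σ v (n + n + n)) ≤ 3 * ℓ (twistedPow σ v n) := by
      have h1 := fsub (n + n) n
      have h2 := fsub n n
      omega
    have h4 := lower (n + n + n)
    have : (n + n + n) * ℓ v = 3 * (n * ℓ v) := by ring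
    omega
  induction hchain with
  | refl => exact hw
  | tail _ h ih => exact step _ _ h ih
end
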